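/- arXiv:0706.3131 — 5 statements merged into one kernel-verified Lean document; each statement's English description precedes it below -/
import Mathlib

section
/- Let G be the group defined by a finite L-presentation ⟨S ∣ Q ∣ Φ ∣ R⟩ and let n ∈ ℕ. Let H = F/γₙ(F) with natural epimorphism ε : F → H; since γₙ(F) is invariant under every endomorphism of F, each φ ∈ Φ* induces an endomorphism φ̃ of H satisfying φ̃ ∘ ε = ε ∘ φ. Then G/γₙ(G) ≅ H/(U_G)^H, where U_G = ⟨ε(q), φ̃(ε(r)) : q ∈ Q, r ∈ R, φ ∈ Φ*⟩ and (U_G)^H denotes the normal closure of U_G in H. -/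
/-!
Both sides are quotients of the free group `F` by `K γₙ(F)`. On the left, `γₙ(F/K)` is the image
of `γₙ(F)`, so the third isomorphism theorem gives `G/γₙ(G) ≅ F/(K γₙ(F))`. On the right, the
normal closure of `U_G` is the image in `H` of the normal closure `K` of the relators, because
`φ̃ ∘ ε = ε ∘ φ` makes `U_G` the subgroup generated by the images of the relators; hence also
`H/(U_G)^H ≅ F/(K γₙ(F))`.
-/

open Subgroup QuotientGroup

section ThirdIsomorphism

variable {G : Type*} [Group G]

noncomputable def QuotientGroup.quotientQuotientEquivQuotientOfMapEq {N M : Subgroup G}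
    [N.Normal] [M.Normal] (hNM : N ≤ M) {P : Subgroup (G ⧸ N)} [P.Normal]
    (hP : M.map (mk' N) = P) : (G ⧸ N) ⧸ P ≃* G ⧸ M :=
  (quotientMulEquivOfEq hP.symm).trans (quotientQuotientEquivQuotient N M hNM)

theorem Subgroup.map_lowerCentralSeries_top_of_surjective {H : Type*} [Group H] {f : G →* H}
    (hf : Function.Surjective f) (n : ℕ) :
    ((⊤ : Subgroup G).lowerCentralSeries n).map f = (⊤ : Subgroup H).lowerCentralSeries n := by
  rw [map_lowerCentralSeries, map_top_of_surjective f hf]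

noncomputable def QuotientGroup.quotientLowerCentralSeriesEquiv (N : Subgroup G) [N.Normal]
    (n : ℕ) :
    (G ⧸ N) ⧸ (⊤ : Subgroup (G ⧸ N)).lowerCentralSeries n ≃*
      G ⧸ (N ⊔ (⊤ : Subgroup G).lowerCentralSeries n) :=
  quotientQuotientEquivQuotientOfMapEq le_sup_left <| by
    rw [Subgroup.map_sup, ← map_lowerCentralSeries_top_of_surjective (mk'_surjective N),
      map_mk'_self N, bot_sup_eq]

noncomputable def QuotientGroup.quotientNormalClosureImageEquiv (L : Subgroup G) [L.Normal]
    (s : Set G) :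
    (G ⧸ L) ⧸ normalClosure (mk' L '' s) ≃* G ⧸ (normalClosure s ⊔ L) :=
  quotientQuotientEquivQuotientOfMapEq le_sup_right <| by
    rw [Subgroup.map_sup, map_mk'_self L, sup_bot_eq,
      map_normalClosure s _ (mk'_surjective L)]

end ThirdIsomorphism

theorem image_relators_eq {F H : Type*} [Group F] [Group H] (ε : F →* H)
    (ind : Monoid.End F → Monoid.End H) (Q R : Set F) (T : Set (Monoid.End F))
    (hind : ∀ φ ∈ T, ∀ x, ind φ (ε x) = ε (φ x)) :
    ε '' (Q ∪ ⋃ φ ∈ T, ⇑φ '' R) =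
      {h | ∃ q ∈ Q, h = ε q} ∪ {h | ∃ r ∈ R, ∃ φ ∈ T, h = ind φ (ε r)} := by
  ext h
  simp only [Set.image_union, Set.mem_union, Set.mem_image, Set.mem_iUnion, Set.mem_ofPred_eq]
  constructor
  · rintro (⟨q, hq, rfl⟩ | ⟨x, ⟨φ, hφ, r, hr, rfl⟩, rfl⟩)
    · exact Or.inl ⟨q, hq, rfl⟩
    · exact Or.inr ⟨r, hr, φ, hφ, (hind φ hφ r).symm⟩
  · rintro (⟨q, hq, rfl⟩ | ⟨r, hr, φ, hφ, rfl⟩)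
    · exact Or.inl ⟨q, hq, rfl⟩
    · exact Or.inr ⟨φ r, ⟨φ, hφ, r, hr, rfl⟩, (hind φ hφ r).symm⟩

/-- `lowerCentralSeries ⊤ n` is `γ_{n+1}`, so this covers every `γₙ` with `n ≥ 1`. -/
theorem lpres_nilpotent_quotient_I
    (m : ℕ) (Q R : Set (FreeGroup (Fin m)))
    (Φ : Set (Monoid.End (FreeGroup (Fin m))))
    (K : Subgroup (FreeGroup (Fin m))) [K.Normal]
    (hK : K = Subgroup.normalClosure
      (Q ∪ ⋃ φ ∈ Submonoid.closure Φ, ⇑φ '' R))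
    (n : ℕ)
    -- the natural epimorphism `ε : F → H = F/γ_{n+1}(F)`
    (ε : FreeGroup (Fin m) →*
      (FreeGroup (Fin m) ⧸ Subgroup.lowerCentralSeries (⊤ : Subgroup (FreeGroup (Fin m))) n))
    (hε : ε = QuotientGroup.mk' (Subgroup.lowerCentralSeries (⊤ : Subgroup (FreeGroup (Fin m))) n))
    -- `φ ↦ φ̃`, the induced endomorphism of `H`, satisfying `φ̃ ∘ ε = ε ∘ φ`
    (ind : Monoid.End (FreeGroup (Fin m)) →
      Monoid.End (FreeGroup (Fin m) ⧸ Subgroup.lowerCentralSeries (⊤ : Subgroup (FreeGroup (Fin m))) n))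
    (hind : ∀ φ ∈ Submonoid.closure Φ, ∀ x : FreeGroup (Fin m),
      ind φ (ε x) = ε (φ x))
    -- the subgroup `U_G` of `H`
    (U : Subgroup (FreeGroup (Fin m) ⧸ Subgroup.lowerCentralSeries (⊤ : Subgroup (FreeGroup (Fin m))) n))
    (hU : U = Subgroup.closure
      ({h | ∃ q ∈ Q, h = ε q} ∪
       {h | ∃ r ∈ R, ∃ φ ∈ Submonoid.closure Φ, h = ind φ (ε r)})) :
    Nonempty
      (((FreeGroup (Fin m) ⧸ K) ⧸
          Subgroup.lowerCentralSeries (⊤ : Subgroup (FreeGroup (Fin m) ⧸ K)) n)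
        ≃* ((FreeGroup (Fin m) ⧸ Subgroup.lowerCentralSeries (⊤ : Subgroup (FreeGroup (Fin m))) n) ⧸
              Subgroup.normalClosure (U : Set _))) := by
  subst hK hU
  have hUG : normalClosure (closure ({h | ∃ q ∈ Q, h = ε q} ∪
      {h | ∃ r ∈ R, ∃ φ ∈ Submonoid.closure Φ, h = ind φ (ε r)}) : Set _) =
      normalClosure (ε '' (Q ∪ ⋃ φ ∈ Submonoid.closure Φ, ⇑φ '' R)) := by
    rw [normalClosure_closure_eq_normalClosure]
    exact congrArg normalClosure (image_relators_eq ε ind Q R (Submonoid.closure Φ) hind).symm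
  subst hε
  exact ⟨(quotientLowerCentralSeriesEquiv _ n).trans
    ((quotientMulEquivOfEq hUG).trans (quotientNormalClosureImageEquiv _ _)).symm⟩
end

section
/- If the L-presentation ⟨S ∣ Q ∣ Φ ∣ R⟩ is invariant, then K = ⟨⋃_{φ∈Φ*} φ(Q ∪ R)⟩^F; in particular, it defines the same group as the ascending L-presentation ⟨S ∣ ∅ ∣ Φ ∣ Q ∪ R⟩. -/
/-!
Invariance of the generators `Φ` propagates to the monoid `Φ*` they generate, so the normal
subgroup `K` contains `φ(Q ∪ R)` for every `φ ∈ Φ*`. Conversely `Q` and every `φ(R)` already occur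
among the sets `φ(Q ∪ R)`, taking `φ = 1` for `Q`.
-/

namespace Subgroup

variable {G : Type*} [Group G]

def endStabilizer (K : Subgroup G) : Submonoid (Monoid.End G) where
  carrier := {φ | ∀ x ∈ K, φ x ∈ K}
  one_mem' _ hx := hx
  mul_mem' hφ hψ x hx := hφ _ (hψ x hx)

theorem closure_le_endStabilizer {K : Subgroup G} {Φ : Set (Monoid.End G)}
    (hinv : ∀ φ ∈ Φ, ∀ x ∈ K, φ x ∈ K) : Submonoid.closure Φ ≤ K.endStabilizer :=
  Submonoid.closure_le.2 hinv

end Subgroup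

theorem Submonoid.subset_biUnion_image {G : Type*} [Group G] (M : Submonoid (Monoid.End G))
    (S : Set G) : S ⊆ ⋃ φ ∈ M, ⇑φ '' S :=
  fun x hx => Set.mem_biUnion M.one_mem ⟨x, hx, rfl⟩

/-- If the `L`-presentation `⟨S ∣ Q ∣ Φ ∣ R⟩` is invariant,
then `K = ⟨⋃_{φ∈Φ*} φ(Q ∪ R)⟩^F`; in particular it defines the same group as
the ascending `L`-presentation `⟨S ∣ ∅ ∣ Φ ∣ Q ∪ R⟩`. -/
theorem invariant_lpres_eq_ascending
    (m : ℕ) (Q R : Set (FreeGroup (Fin m)))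
    (Φ : Set (Monoid.End (FreeGroup (Fin m))))
    (K : Subgroup (FreeGroup (Fin m)))
    (hK : K = Subgroup.normalClosure
      (Q ∪ ⋃ φ ∈ Submonoid.closure Φ, ⇑φ '' R))
    -- invariance of the `L`-presentation
    (hinv : ∀ φ ∈ Φ, ∀ x ∈ K, φ x ∈ K) :
    K = Subgroup.normalClosure
      (⋃ φ ∈ Submonoid.closure Φ, ⇑φ '' (Q ∪ R)) := by
  have : K.Normal := hK ▸ Subgroup.normalClosure_normal
  have hQR : Q ∪ R ⊆ K := hK ▸ (Set.union_subset_union_right Q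
    ((Submonoid.closure Φ).subset_biUnion_image R)).trans Subgroup.subset_normalClosure
  apply le_antisymm
  · rw [hK]
    refine Subgroup.normalClosure_mono (Set.union_subset ?_ ?_)
    · exact Set.subset_union_left.trans ((Submonoid.closure Φ).subset_biUnion_image _)
    · exact Set.biUnion_mono subset_rfl fun φ _ => Set.image_mono Set.subset_union_right
  · refine Subgroup.normalClosure_le_normal (Set.iUnion₂_subset fun φ hφ => ?_)
    rintro _ ⟨y, hy, rfl⟩
    exact Subgroup.closure_le_endStabilizer hinv hφ y (hQR hy)
end

section
/- Let G be defined by the finite L-presentation ⟨S ∣ Q ∣ Φ ∣ R⟩, let Q̄ ⊆ Q, and let Ḡ be defined by the L-presentation ⟨S ∣ Q̄ ∣ Φ ∣ R⟩, so that K̄ = ⟨Q̄ ∪ ⋃_{φ∈Φ*} φ(R)⟩^F ⊆ K. For n ∈ ℕ set H = Ḡ/γₙ(Ḡ) and let π : F → H be the natural epimorphism. Then G/γₙ(G) ≅ H/⟨U⟩^H, where U = π(Q∖Q̄) and ⟨U⟩^H is the normal closure of U in H. -/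
/-!
Both groups are quotients of the free group `F`, so it suffices to compare kernels.
The kernel of `F → G/γₙ(G)` is `γₙ(F) K`, that of `π` is `γₙ(F) K̄`, and pulling `⟨π(Q∖Q̄)⟩^H`
back along the epimorphism `π` adds `⟨Q∖Q̄⟩^F`. Since `K = ⟨Q∖Q̄⟩^F K̄`, the two kernels agree.
-/

namespace Subgroup

variable {G H : Type*} [Group G] [Group H]

theorem ker_mk'_comp_mk'_lowerCentralSeries (M : Subgroup G) [M.Normal] (n : ℕ) :
    ((QuotientGroup.mk' ((⊤ : Subgroup (G ⧸ M)).lowerCentralSeries n)).comp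
      (QuotientGroup.mk' M)).ker = (⊤ : Subgroup G).lowerCentralSeries n ⊔ M := by
  rw [← MonoidHom.comap_ker, QuotientGroup.ker_mk',
    ← map_top_of_surjective _ (QuotientGroup.mk'_surjective M), ← map_lowerCentralSeries,
    comap_map_eq, QuotientGroup.ker_mk']

theorem ker_mk'_normalClosure_image_comp {f : G →* H} (hf : Function.Surjective f) (s : Set G) :
    ((QuotientGroup.mk' (normalClosure (f '' s))).comp f).ker = normalClosure s ⊔ f.ker := by
  rw [← MonoidHom.comap_ker, QuotientGroup.ker_mk', ← map_normalClosure s f hf, comap_map_eq]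

end Subgroup

theorem MonoidHom.nonempty_mulEquiv_of_ker_eq {G A B : Type*} [Group G] [Group A] [Group B]
    {f : G →* A} {g : G →* B} (hf : Function.Surjective f) (hg : Function.Surjective g)
    (h : f.ker = g.ker) : Nonempty (A ≃* B) :=
  ⟨(QuotientGroup.quotientKerEquivOfSurjective f hf).symm.trans
    ((QuotientGroup.quotientMulEquivOfEq h).trans
      (QuotientGroup.quotientKerEquivOfSurjective g hg))⟩

theorem lpres_nilpotent_quotient_nonInvariant_general
    (m : ℕ) (Q Qbar R : Set (FreeGroup (Fin m))) (hQbar : Qbar ⊆ Q)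
    (Φ : Set (Monoid.End (FreeGroup (Fin m))))
    (K Kbar : Subgroup (FreeGroup (Fin m))) [K.Normal] [Kbar.Normal]
    (hK : K = Subgroup.normalClosure
      (Q ∪ ⋃ φ ∈ Submonoid.closure Φ, ⇑φ '' R))
    (hKbar : Kbar = Subgroup.normalClosure
      (Qbar ∪ ⋃ φ ∈ Submonoid.closure Φ, ⇑φ '' R))
    (n : ℕ)
    -- the natural epimorphism `π : F → H = Ḡ/γ_{n+1}(Ḡ)`
    (π : FreeGroup (Fin m) →*
      ((FreeGroup (Fin m) ⧸ Kbar) ⧸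
        (⊤ : Subgroup (FreeGroup (Fin m) ⧸ Kbar)).lowerCentralSeries n))
    (hπ : π = (QuotientGroup.mk'
        ((⊤ : Subgroup (FreeGroup (Fin m) ⧸ Kbar)).lowerCentralSeries n)).comp
      (QuotientGroup.mk' Kbar)) :
    Nonempty
      (((FreeGroup (Fin m) ⧸ K) ⧸
          (⊤ : Subgroup (FreeGroup (Fin m) ⧸ K)).lowerCentralSeries n)
        ≃* (((FreeGroup (Fin m) ⧸ Kbar) ⧸
              (⊤ : Subgroup (FreeGroup (Fin m) ⧸ Kbar)).lowerCentralSeries n) ⧸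
            Subgroup.normalClosure (⇑π '' (Q \ Qbar)))) := by
  have hK_eq : K = Subgroup.normalClosure (Q \ Qbar) ⊔ Kbar := by
    rw [hK, hKbar, ← Subgroup.normalClosure_union, ← Set.union_assoc,
      Set.sdiff_union_of_subset hQbar]
  have hπ_surj : Function.Surjective π := by
    rw [hπ]
    exact (QuotientGroup.mk'_surjective _).comp (QuotientGroup.mk'_surjective Kbar)
  refine MonoidHom.nonempty_mulEquiv_of_ker_eq
    (f := (QuotientGroup.mk' _).comp (QuotientGroup.mk' K)) (g := (QuotientGroup.mk' _).comp π)
    ((QuotientGroup.mk'_surjective _).comp (QuotientGroup.mk'_surjective K))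
    ((QuotientGroup.mk'_surjective _).comp hπ_surj) ?_
  rw [Subgroup.ker_mk'_normalClosure_image_comp hπ_surj, hπ,
    Subgroup.ker_mk'_comp_mk'_lowerCentralSeries, Subgroup.ker_mk'_comp_mk'_lowerCentralSeries,
    hK_eq, sup_left_comm]

/-- Let `G = F/K` be defined by the finite `L`-presentation
`⟨S ∣ Q ∣ Φ ∣ R⟩`, let `Q̄ ⊆ Q`, and let `Ḡ = F/K̄` be defined by
`⟨S ∣ Q̄ ∣ Φ ∣ R⟩`, so that `K̄ ⊆ K`.  For `n ∈ ℕ` set `H = Ḡ/γₙ(Ḡ)`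
(here `lowerCentralSeries · n = γ_{n+1}(·)`, covering every `γₙ`, `n ≥ 1`)
with natural epimorphism `π : F → H`.  Then
`G/γₙ(G) ≅ H/⟨π(Q∖Q̄)⟩^H`. -/
theorem lpres_nilpotent_quotient_nonInvariant
    (m : ℕ) (Q Qbar R : Set (FreeGroup (Fin m))) (hQbar : Qbar ⊆ Q)
    (Φ : Set (Monoid.End (FreeGroup (Fin m))))
    (K Kbar : Subgroup (FreeGroup (Fin m))) [K.Normal] [Kbar.Normal]
    (hK : K = Subgroup.normalClosure
      (Q ∪ ⋃ φ ∈ Submonoid.closure Φ, ⇑φ '' R))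
    (hKbar : Kbar = Subgroup.normalClosure
      (Qbar ∪ ⋃ φ ∈ Submonoid.closure Φ, ⇑φ '' R))
    (hsub : Kbar ≤ K)
    (n : ℕ)
    -- the natural epimorphism `π : F → H = Ḡ/γ_{n+1}(Ḡ)`
    (π : FreeGroup (Fin m) →*
      ((FreeGroup (Fin m) ⧸ Kbar) ⧸
        (⊤ : Subgroup (FreeGroup (Fin m) ⧸ Kbar)).lowerCentralSeries n))
    (hπ : π = (QuotientGroup.mk'
        ((⊤ : Subgroup (FreeGroup (Fin m) ⧸ Kbar)).lowerCentralSeries n)).comp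
      (QuotientGroup.mk' Kbar)) :
    Nonempty
      (((FreeGroup (Fin m) ⧸ K) ⧸
          (⊤ : Subgroup (FreeGroup (Fin m) ⧸ K)).lowerCentralSeries n)
        ≃* (((FreeGroup (Fin m) ⧸ Kbar) ⧸
              (⊤ : Subgroup (FreeGroup (Fin m) ⧸ Kbar)).lowerCentralSeries n) ⧸
            Subgroup.normalClosure (⇑π '' (Q \ Qbar)))) :=
  lpres_nilpotent_quotient_nonInvariant_general m Q Qbar R hQbar Φ K Kbar hK hKbar n π hπ
end

section
/- The subgroup ⟨σ₀, σ₁, …, σ_{p−1}⟩ of Γ^p is isomorphic, via an isomorphism sending the i-th generator to σᵢ, to the presented group on generators x₀,…,x_{p−1} with relators {xᵢ^p : i ∈ ℤ/pℤ} ∪ {[xᵢ^{x_{i-1}ⁿ}, xⱼ^{x_{j-1}^m}] : 2 ≤ |i−j| ≤ p−2, 0 ≤ m,n ≤ p−1} ∪ {xᵢ^{−x_{i-1}^{n+1}}·xᵢ^{x_{i-1}ⁿ·x_{i-1}^{x_{i-2}^m}} : i ∈ ℤ/pℤ, 0 ≤ m,n ≤ p−1} (indices mod p); equivalently, the kernel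 of the homomorphism from the free group on x₀,…,x_{p−1} to Γ^p sending xᵢ ↦ σᵢ is the normal closure of these relators. -/
/-- Conjugation `g ^ h = h⁻¹ g h`. -/
def cnj {G : Type*} [Group G] (g h : G) : G := h⁻¹ * g * h

/-- The commutator `[g, h] = g⁻¹ h⁻¹ g h`. -/
def pbra {G : Type*} [Group G] (g h : G) : G := g⁻¹ * h⁻¹ * g * h

/-- The relators `α^p, ρ^p` of `Γ = ⟨α, ρ ∣ α^p, ρ^p⟩`. -/
def CpCpRels (p : ℕ) : Set (FreeGroup (Fin 2)) :=
  {FreeGroup.of 0 ^ p, FreeGroup.of 1 ^ p}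

/-- `Γ = ⟨α, ρ ∣ α^p, ρ^p⟩`, the free product of two cyclic groups of order `p`. -/
def Gam (p : ℕ) : Type := PresentedGroup (CpCpRels p)

instance (p : ℕ) : Group (Gam p) := by unfold Gam; infer_instance

/-- The generator `α` of `Γ`. -/
def αΓ (p : ℕ) : Gam p := PresentedGroup.of 0

/-- The generator `ρ` of `Γ`. -/
def ρΓ (p : ℕ) : Gam p := PresentedGroup.of 1

/-- `αᵢ ∈ Γ^p`: the element whose `i`-th coordinate is `α`, others trivial. -/
def αt (p : ℕ) (i : ZMod p) : ZMod p → Gam p := Pi.mulSingle i (αΓ p)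

/-- `ρᵢ ∈ Γ^p`: the element whose `i`-th coordinate is `ρ`, others trivial. -/
def ρt (p : ℕ) (i : ZMod p) : ZMod p → Gam p := Pi.mulSingle i (ρΓ p)

/-- `σᵢ = ρᵢ·α_{i+1} ∈ Γ^p` (indices mod `p`). -/
def σt (p : ℕ) (i : ZMod p) : ZMod p → Gam p := ρt p i * αt p (i + 1)

/-- The relators of the presentation of `Φ(Δ) = ⟨σ₀, …, σ_{p-1}⟩ ≤ Γ^p`:
`xᵢ^p`; the commutators `[xᵢ^{x_{i-1}ⁿ}, xⱼ^{x_{j-1}^m}]` for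
`2 ≤ |i-j| ≤ p-2` (equivalently `i - j ∉ {0, 1, -1}` in `ℤ/pℤ`) and
`0 ≤ m, n ≤ p-1`; and the words
`xᵢ^{-x_{i-1}^{n+1}}·xᵢ^{x_{i-1}ⁿ·x_{i-1}^{x_{i-2}^m}}` (indices mod `p`). -/
def PhiDeltaRels (p : ℕ) : Set (FreeGroup (ZMod p)) :=
  {w | ∃ i : ZMod p, w = FreeGroup.of i ^ p} ∪
  {w | ∃ (i j : ZMod p) (n m : ℕ), n < p ∧ m < p ∧
      i - j ≠ 0 ∧ i - j ≠ 1 ∧ i - j ≠ -1 ∧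
      w = pbra (cnj (FreeGroup.of i) (FreeGroup.of (i - 1) ^ n))
        (cnj (FreeGroup.of j) (FreeGroup.of (j - 1) ^ m))} ∪
  {w | ∃ (i : ZMod p) (n m : ℕ), n < p ∧ m < p ∧
      w = (cnj (FreeGroup.of i) (FreeGroup.of (i - 1) ^ (n + 1)))⁻¹ *
        cnj (FreeGroup.of i) (FreeGroup.of (i - 1) ^ n *
          cnj (FreeGroup.of (i - 1)) (FreeGroup.of (i - 2) ^ m))}

/-!
Let `Q` be the presented group and `σHom : Q → Γ^p`, `xᵢ ↦ σᵢ`; it suffices that `σHom` is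
injective. Put `zᵢ(n) = xᵢ^{x_{i-1}ⁿ}`, `uᵢ(n) = zᵢ(n) xᵢ⁻¹` (`Z`, `U`) and let `Mᵢ` be the
subgroup generated by the `xᵢ`-conjugates of the `uᵢ(n)`. The relators make every `Mᵢ` normal,
make `Mᵢ` and `Mⱼ` commute for `i ≠ j`, and make `Q / ⨆ Mᵢ` abelian of exponent `p`; since the
`ρ`-exponent of the `k`-th coordinate of `σᵢ` is `δᵢₖ`, this gives `ker σHom ≤ ⨆ Mᵢ`.
The `k`-th coordinate of `σHom` kills `Mᵢ` for `i ≠ k`, and it is injective on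
`Mₖ ≤ ⟨x_{k-1}, xₖ⟩` because `α ↦ x_{k-1}`, `ρ ↦ xₖ` defines a retraction `τ k : Γ → Q`.
Hence an element of `⨆ Mᵢ = ∏ Mᵢ` in the kernel is trivial.
-/

section Conjugation

variable {G H : Type*} [Group G] [Group H]

lemma cnj_eq_conj (g h : G) : cnj g h = MulAut.conj h⁻¹ g := by
  simp [cnj]

@[simp] lemma cnj_one (g : G) : cnj g 1 = g := by simp [cnj]

@[simp] lemma one_cnj (h : G) : cnj 1 h = 1 := by simp [cnj]

lemma cnj_inv_right (a g : G) : cnj a g⁻¹ = g * a * g⁻¹ := by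
  simp [cnj]

lemma cnj_mul (g h₁ h₂ : G) : cnj g (h₁ * h₂) = cnj (cnj g h₁) h₂ := by
  simp [cnj, mul_assoc]

lemma cnj_mul_left (a b g : G) : cnj (a * b) g = cnj a g * cnj b g := by
  simp only [cnj]
  group

lemma cnj_inv_left (a g : G) : cnj a⁻¹ g = (cnj a g)⁻¹ := by
  simp only [cnj]
  group

lemma cnj_zpow_left (a g : G) (k : ℤ) : cnj (a ^ k) g = cnj a g ^ k := by
  rw [cnj_eq_conj, cnj_eq_conj, map_zpow]

lemma cnj_cnj (a b g : G) : cnj (cnj a b) g = cnj (cnj a g) (cnj b g) := by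
  simp only [cnj]
  group

lemma Commute.cnj {a b : G} (h : Commute a b) (g : G) : Commute (cnj a g) (cnj b g) := by
  simpa only [cnj_eq_conj] using h.map (MulAut.conj g⁻¹)

lemma cnj_mem_of_mem_normalizer {K : Subgroup G} {g h : G}
    (hg : g ∈ Subgroup.normalizer (K : Set G)) (hh : h ∈ K) : cnj h g ∈ K :=
  (Subgroup.mem_normalizer_iff''.mp hg h).mp hh

lemma cnj_eq_self_iff {g h : G} : cnj g h = g ↔ Commute g h := by
  rw [cnj, mul_assoc, inv_mul_eq_iff_eq_mul, commute_iff_eq]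

lemma pbra_eq_one_iff {g h : G} : pbra g h = 1 ↔ Commute g h := by
  rw [← Commute.inv_inv_iff, ← commutatorElement_eq_one_iff_commute, commutatorElement_def,
    inv_inv, inv_inv, pbra]

lemma map_cnj (f : G →* H) (g h : G) : f (cnj g h) = cnj (f g) (f h) := by
  simp [cnj]

lemma map_pbra (f : G →* H) (g h : G) : f (pbra g h) = pbra (f g) (f h) := by
  simp [pbra]

lemma cnj_apply {ι : Type*} {G : ι → Type*} [∀ i, Group (G i)] (g h : ∀ i, G i) (k : ι) :
    cnj g h k = cnj (g k) (h k) :=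
  rfl

lemma pbra_apply {ι : Type*} {G : ι → Type*} [∀ i, Group (G i)] (g h : ∀ i, G i) (k : ι) :
    pbra g h k = pbra (g k) (h k) :=
  rfl

end Conjugation

section GroupTheory

open Subgroup

variable {G : Type*} [Group G]

lemma exists_lt_zpow_eq {n : ℕ} [NeZero n] {g : G} (hg : g ^ n = 1) (m : ℤ) :
    ∃ k < n, g ^ m = g ^ k := by
  have hn : (0 : ℤ) < n := by exact_mod_cast Nat.pos_of_neZero n
  have h₀ := Int.emod_nonneg m hn.ne'
  have h₁ := Int.emod_lt_of_pos m hn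
  refine ⟨(m % n).toNat, by omega, ?_⟩
  rw [zpow_eq_zpow_emod' m hg, ← zpow_natCast, Int.toNat_of_nonneg h₀]

def zmodPowHom {n : ℕ} [NeZero n] (g : G) (hg : g ^ n = 1) : Multiplicative (ZMod n) →* G where
  toFun a := g ^ a.toAdd.val
  map_one' := by simp
  map_mul' a b := by
    rw [toAdd_mul, ZMod.val_add, ← pow_eq_pow_mod _ hg, pow_add]

lemma zmodPowHom_ofAdd_one {n : ℕ} [Fact (1 < n)] (g : G) (hg : g ^ n = 1) :
    zmodPowHom g hg (.ofAdd 1) = g := by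
  simp [zmodPowHom, ZMod.val_one]

theorem ker_le_of_commute_mk {ι : Type*} [Fintype ι] [DecidableEq ι] {n : ℕ} [Fact (1 < n)]
    (N : Subgroup G) [N.Normal] {x : ι → G} (hx : closure (Set.range x) = ⊤)
    (hxn : ∀ i, x i ^ n = 1) (hcomm : ∀ i j, Commute (x i : G ⧸ N) (x j : G ⧸ N))
    (χ : G →* ι → Multiplicative (ZMod n)) (hχ : ∀ i, χ (x i) = Pi.mulSingle i (.ofAdd 1)) :
    χ.ker ≤ N := by
  have hxn' (i : ι) : (x i : G ⧸ N) ^ n = 1 := by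
    rw [← QuotientGroup.mk_pow, hxn, QuotientGroup.mk_one]
  have hψcomm : Pairwise fun i j => ∀ a b,
      Commute (zmodPowHom _ (hxn' i) a) (zmodPowHom _ (hxn' j) b) :=
    fun i j _ a b => (hcomm i j).pow_pow _ _
  let ψ := MonoidHom.noncommPiCoprod _ hψcomm
  have hψ : ψ.comp χ = QuotientGroup.mk' N := by
    refine MonoidHom.eq_of_eqOn_dense hx ?_
    rintro _ ⟨i, rfl⟩
    simp only [ψ, MonoidHom.comp_apply, hχ]
    rw [MonoidHom.noncommPiCoprod_mulSingle, zmodPowHom_ofAdd_one]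
    rfl
  intro g hg
  rw [← QuotientGroup.eq_one_iff, ← QuotientGroup.mk'_apply, ← hψ, MonoidHom.comp_apply,
    MonoidHom.mem_ker.mp hg, map_one]

theorem eq_one_of_mem_iSup {K ι : Type*} [Group K] [Fintype ι] [DecidableEq ι]
    {H : ι → Subgroup G} (hcomm : Pairwise fun i j => ∀ x y, x ∈ H i → y ∈ H j → Commute x y)
    (f : ι → G →* K) (hker : ∀ i j, i ≠ j → H i ≤ (f j).ker)
    (hinj : ∀ i, ∀ g ∈ H i, f i g = 1 → g = 1)
    {g : G} (hg : g ∈ ⨆ i, H i) (hfg : ∀ i, f i g = 1) : g = 1 := by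
  rw [← noncommPiCoprod_range (hcomm := hcomm)] at hg
  obtain ⟨v, rfl⟩ := hg
  have hcoord (j : ι) :
      (f j).comp (noncommPiCoprod hcomm) =
        (f j).comp ((H j).subtype.comp (Pi.evalMonoidHom _ j)) := by
    refine MonoidHom.pi_ext fun i y => ?_
    rcases eq_or_ne i j with rfl | hij
    · simp
    · simpa [Pi.mulSingle_eq_of_ne' hij] using hker i j hij y.2
  have hv : v = 1 := funext fun j => Subtype.ext <| hinj j _ (v j).2 <| by
    simpa using (DFunLike.congr_fun (hcoord j) v).symm.trans (hfg j)
  simp [hv]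

end GroupTheory

section Coordinates

variable {p : ℕ}

lemma zmod_two_ne_zero [Fact (2 < p)] : (2 : ZMod p) ≠ 0 := by
  intro h
  simpa [ZMod.val_ofNat_of_lt (Fact.out : 2 < p)] using congrArg ZMod.val h

instance [Fact (2 < p)] : Fact (1 < p) := ⟨one_lt_two.trans Fact.out⟩

lemma αΓ_pow_card : αΓ p ^ p = 1 :=
  (map_pow _ _ _).symm.trans (PresentedGroup.one_of_mem (Set.mem_insert _ _))

lemma ρΓ_pow_card : ρΓ p ^ p = 1 :=
  (map_pow _ _ _).symm.trans (PresentedGroup.one_of_mem (Set.mem_insert_of_mem _ rfl))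

lemma σt_apply_of_ne {i k : ZMod p} (h₁ : k ≠ i) (h₂ : k ≠ i + 1) : σt p i k = 1 := by
  simp [σt, ρt, αt, h₁, h₂]

variable [Fact (1 < p)]

lemma σt_apply_self (i : ZMod p) : σt p i i = ρΓ p := by
  simp [σt, ρt, αt]

lemma σt_apply_add_one (i : ZMod p) : σt p i (i + 1) = αΓ p := by
  simp [σt, ρt, αt]

lemma σt_pow_card (i : ZMod p) : σt p i ^ p = 1 := by
  funext k
  rw [Pi.pow_apply, Pi.one_apply]
  by_cases hk : k = i
  · rw [hk, σt_apply_self, ρΓ_pow_card]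
  by_cases hk' : k = i + 1
  · rw [hk', σt_apply_add_one, αΓ_pow_card]
  · rw [σt_apply_of_ne hk hk', one_pow]

end Coordinates

section Relators

variable {p : ℕ}

lemma pbra_cnj_σt_eq_one {i j : ZMod p} (h₀ : i - j ≠ 0) (h₁ : i - j ≠ 1) (h₂ : i - j ≠ -1)
    (n m : ℕ) : pbra (cnj (σt p i) (σt p (i - 1) ^ n)) (cnj (σt p j) (σt p (j - 1) ^ m)) = 1 := by
  funext k
  rw [pbra_apply, cnj_apply, cnj_apply, Pi.pow_apply, Pi.pow_apply, Pi.one_apply]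
  by_cases hk : k = i ∨ k = i + 1
  · rw [σt_apply_of_ne (i := j) (by grind) (by grind)]
    simp [pbra]
  · rw [σt_apply_of_ne (not_or.mp hk).1 (not_or.mp hk).2]
    simp [pbra]

lemma σt_shift_relator_eq_one [Fact (2 < p)] (i : ZMod p) (n m : ℕ) :
    (cnj (σt p i) (σt p (i - 1) ^ (n + 1)))⁻¹ *
      cnj (σt p i) (σt p (i - 1) ^ n * cnj (σt p (i - 1)) (σt p (i - 2) ^ m)) = 1 := by
  have h₁ : (1 : ZMod p) ≠ 0 := one_ne_zero
  have h₂ : (2 : ZMod p) ≠ 0 := zmod_two_ne_zero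
  funext k
  simp only [Pi.mul_apply, Pi.inv_apply, cnj_apply, Pi.pow_apply, Pi.one_apply]
  by_cases hk : k = i
  · subst hk
    have hα : σt p (k - 1) k = αΓ p := by rw [← σt_apply_add_one (k - 1), sub_add_cancel]
    rw [σt_apply_self, hα, σt_apply_of_ne (fun e => h₂ (by linear_combination e))
      (fun e => h₁ (by linear_combination e))]
    simp [cnj, pow_succ, mul_assoc]
  by_cases hk' : k = i + 1
  · subst hk'
    rw [σt_apply_add_one, σt_apply_of_ne (fun e => h₂ (by linear_combination e))
      (fun e => h₁ (by linear_combination e))]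
    simp
  · rw [σt_apply_of_ne hk hk']
    simp

lemma lift_σt_eq_one [Fact (2 < p)] : ∀ r ∈ PhiDeltaRels p, FreeGroup.lift (σt p) r = 1 := by
  rintro r ((⟨i, rfl⟩ | ⟨i, j, n, m, -, -, h₀, h₁, h₂, rfl⟩) | ⟨i, n, m, -, -, rfl⟩)
  · simp [σt_pow_card]
  · simpa [map_pbra, map_cnj] using pbra_cnj_σt_eq_one h₀ h₁ h₂ n m
  · simpa [map_cnj] using σt_shift_relator_eq_one i n m

end Relators

namespace PhiDelta

open Subgroup

variable {p : ℕ}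

abbrev Q (p : ℕ) : Type := PresentedGroup (PhiDeltaRels p)

def X (i : ZMod p) : Q p := PresentedGroup.of i

def Z (i : ZMod p) (n : ℤ) : Q p := cnj (X i) (X (i - 1) ^ n)

def U (i : ZMod p) (n : ℤ) : Q p := Z i n * (X i)⁻¹

def M (i : ZMod p) : Subgroup (Q p) := closure {g | ∃ n k : ℤ, g = cnj (U i n) (X i ^ k)}

lemma X_pow_card (i : ZMod p) : X i ^ p = 1 :=
  (map_pow _ _ _).symm.trans (PresentedGroup.one_of_mem (Or.inl (Or.inl ⟨i, rfl⟩)))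

@[simp] lemma Z_zero (i : ZMod p) : Z i 0 = X i := by simp [Z]

lemma cnj_Z_zpow (i : ZMod p) (n k : ℤ) : cnj (Z i n) (X (i - 1) ^ k) = Z i (n + k) := by
  rw [Z, Z, ← cnj_mul, zpow_add]

lemma Z_commute_Z [NeZero p] {i j : ZMod p} (h₀ : i - j ≠ 0) (h₁ : i - j ≠ 1) (h₂ : i - j ≠ -1)
    (n m : ℤ) : Commute (Z i n) (Z j m) := by
  obtain ⟨a, ha, hna⟩ := exists_lt_zpow_eq (X_pow_card (i - 1)) n
  obtain ⟨b, hb, hmb⟩ := exists_lt_zpow_eq (X_pow_card (j - 1)) m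
  have hrel := PresentedGroup.one_of_mem (rels := PhiDeltaRels p)
    (Or.inl (Or.inr ⟨i, j, a, b, ha, hb, h₀, h₁, h₂, rfl⟩))
  rw [map_pbra, map_cnj, map_cnj, map_pow, map_pow, pbra_eq_one_iff] at hrel
  rwa [Z, Z, hna, hmb]

/-- The third family of relators says that `z_{i-1}(m)` and `x_{i-1}` conjugate `zᵢ(n)` in the
same way. -/
lemma U_commute_Z [NeZero p] (i : ZMod p) (m n : ℤ) : Commute (U (i - 1) m) (Z i n) := by
  obtain ⟨a, ha, hna⟩ := exists_lt_zpow_eq (X_pow_card (i - 1)) n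
  obtain ⟨b, hb, hmb⟩ := exists_lt_zpow_eq (X_pow_card (i - 1 - 1)) m
  have hrel := PresentedGroup.one_of_mem (rels := PhiDeltaRels p)
    (Or.inr ⟨i, a, b, ha, hb, rfl⟩)
  simp only [map_mul, map_inv, map_cnj, map_pow, inv_mul_eq_one] at hrel
  change cnj (X i) (X (i - 1) ^ (a + 1)) =
    cnj (X i) (X (i - 1) ^ a * cnj (X (i - 1)) (X (i - 2) ^ b)) at hrel
  have hz : Z i n = cnj (X i) (X (i - 1) ^ a) := by rw [Z, hna]
  have hw : Z (i - 1) m = cnj (X (i - 1)) (X (i - 2) ^ b) := by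
    rw [Z, hmb, sub_sub, one_add_one_eq_two]
  rw [pow_succ, cnj_mul, cnj_mul, ← hz, ← hw] at hrel
  refine (cnj_eq_self_iff.mp ?_).symm
  rw [U, cnj_mul, ← hrel]
  simp [cnj, mul_assoc]

lemma cnj_U_mem_M (i : ZMod p) (n k : ℤ) : cnj (U i n) (X i ^ k) ∈ M i :=
  subset_closure ⟨n, k, rfl⟩

lemma U_mem_M (i : ZMod p) (n : ℤ) : U i n ∈ M i := by
  simpa using cnj_U_mem_M i n 0

lemma closure_range_Z_le (i : ZMod p) : closure (Set.range (Z i)) ≤ closure {X (i - 1), X i} := by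
  rw [closure_le]
  rintro _ ⟨n, rfl⟩
  have h₁ : X (i - 1) ∈ closure {X (i - 1), X i} := subset_closure (Set.mem_insert _ _)
  have h₂ : X i ∈ closure {X (i - 1), X i} := subset_closure (Set.mem_insert_of_mem _ rfl)
  exact mul_mem (mul_mem (inv_mem (zpow_mem h₁ n)) h₂) (zpow_mem h₁ n)

lemma M_le_closure_range_Z (i : ZMod p) : M i ≤ closure (Set.range (Z i)) := by
  rw [M, closure_le]
  rintro _ ⟨n, k, rfl⟩
  have hZ (m : ℤ) : Z i m ∈ closure (Set.range (Z i)) := subset_closure ⟨m, rfl⟩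
  have hX : X i ∈ closure (Set.range (Z i)) := by simpa using hZ 0
  exact mul_mem (mul_mem (inv_mem (zpow_mem hX k)) (mul_mem (hZ n) (inv_mem hX))) (zpow_mem hX k)

lemma X_mem_normalizer_M (i : ZMod p) : X i ∈ normalizer (M i : Set (Q p)) := by
  suffices zpowers (X i) ≤ normalizer (M i : Set (Q p)) from this (mem_zpowers _)
  rw [M, le_normalizer_closure_iff]
  rintro _ ⟨e, rfl⟩ _ ⟨n, k, rfl⟩
  refine subset_closure ⟨n, k - e, ?_⟩
  simp only [cnj]
  group

lemma cnj_U_zpow (i : ZMod p) (n f : ℤ) :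
    cnj (U i n) (X (i - 1) ^ f) = U i (n + f) * (U i f)⁻¹ := by
  rw [U, cnj_mul_left, cnj_inv_left, cnj_Z_zpow]
  change Z i (n + f) * (Z i f)⁻¹ = _
  simp only [U]
  group

lemma X_sub_one_mem_normalizer_M (i : ZMod p) : X (i - 1) ∈ normalizer (M i : Set (Q p)) := by
  have hZ (f : ℤ) : Z i f ∈ normalizer (M i : Set (Q p)) := by
    rw [show Z i f = U i f * X i by simp [U]]
    exact mul_mem (le_normalizer (U_mem_M i f)) (X_mem_normalizer_M i)
  suffices zpowers (X (i - 1)) ≤ normalizer (M i : Set (Q p)) from this (mem_zpowers _)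
  rw [M, le_normalizer_closure_iff]
  rintro _ ⟨e, rfl⟩ _ ⟨n, k, rfl⟩
  rw [← cnj_inv_right, ← zpow_neg, cnj_cnj, cnj_zpow_left, cnj_U_zpow]
  exact cnj_mem_of_mem_normalizer (zpow_mem (hZ _) k)
    (mul_mem (U_mem_M i _) (inv_mem (U_mem_M i _)))

section

variable [NeZero p]

lemma M_le_centralizer_Z_add_one (i : ZMod p) : M i ≤ centralizer (Set.range (Z (i + 1))) := by
  rw [M, closure_le]
  rintro _ ⟨n, k, rfl⟩
  rw [SetLike.mem_coe, mem_centralizer_iff]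
  rintro _ ⟨b, rfl⟩
  have hU := U_commute_Z (i + 1) n (b - k)
  have hZ := cnj_Z_zpow (i + 1) (b - k) k
  rw [add_sub_cancel_right] at hU hZ
  rw [sub_add_cancel] at hZ
  rw [← hZ]
  exact (hU.cnj _).symm

lemma M_le_centralizer_Z {i j : ZMod p} (hji : j ≠ i) (hj : j ≠ i - 1) :
    M i ≤ centralizer (Set.range (Z j)) := by
  rcases eq_or_ne j (i + 1) with rfl | hj'
  · exact M_le_centralizer_Z_add_one i
  refine (M_le_closure_range_Z i).trans ((closure_le _).mpr ?_)
  rintro _ ⟨n, rfl⟩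
  rw [SetLike.mem_coe, mem_centralizer_iff]
  rintro _ ⟨m, rfl⟩
  exact (Z_commute_Z (fun e => hji (by linear_combination -e))
    (fun e => hj (by linear_combination -e)) (fun e => hj' (by linear_combination -e)) n m).symm

instance M_normal (i : ZMod p) : (M i).Normal := by
  rw [← normalizer_eq_top_iff, eq_top_iff, ← PresentedGroup.closure_range_of, closure_le]
  rintro _ ⟨j, rfl⟩
  change X j ∈ _
  rcases eq_or_ne j i with rfl | hji
  · exact X_mem_normalizer_M j
  rcases eq_or_ne j (i - 1) with rfl | hj
  · exact X_sub_one_mem_normalizer_M i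
  refine centralizer_le_normalizer _ (mem_centralizer_iff.mpr fun h hh => ?_)
  simpa using (mem_centralizer_iff.mp (M_le_centralizer_Z hji hj hh) (Z j 0) ⟨0, rfl⟩).symm

lemma X_commute_mk (i j : ZMod p) : Commute (X i : Q p ⧸ ⨆ k, M k) (X j : Q p ⧸ ⨆ k, M k) := by
  have adj (i : ZMod p) : Commute (X i : Q p ⧸ ⨆ k, M k) (X (i - 1) : Q p ⧸ ⨆ k, M k) := by
    have h := (QuotientGroup.eq_one_iff (U i 1)).mpr (mem_iSup_of_mem i (U_mem_M i 1))
    rw [U, Z, zpow_one, ← QuotientGroup.mk'_apply, map_mul, map_inv, mul_inv_eq_one,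
      map_cnj] at h
    exact cnj_eq_self_iff.mp h
  rcases eq_or_ne j i with rfl | h₀
  · exact Commute.refl _
  rcases eq_or_ne j (i - 1) with rfl | h₁
  · exact adj i
  rcases eq_or_ne i (j - 1) with rfl | h₂
  · exact (adj j).symm
  simpa using (Z_commute_Z (i := i) (j := j) (fun e => h₀ (by linear_combination -e))
    (fun e => h₁ (by linear_combination -e)) (fun e => h₂ (by linear_combination e)) 0 0).map
    (QuotientGroup.mk' (⨆ k, M k))

end

def τ (i : ZMod p) : Gam p →* Q p :=
  PresentedGroup.toGroup (f := ![X (i - 1), X i]) (by rintro r (rfl | rfl) <;> simp [X_pow_card])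

def θ (p : ℕ) : Gam p →* Multiplicative (ZMod p) :=
  PresentedGroup.toGroup (f := ![1, .ofAdd 1]) (by
    rintro r (rfl | rfl) <;> simp [← ofAdd_nsmul])

lemma θ_αΓ : θ p (αΓ p) = 1 := PresentedGroup.toGroup.of _

lemma θ_ρΓ : θ p (ρΓ p) = .ofAdd 1 := PresentedGroup.toGroup.of _

variable [Fact (2 < p)]

lemma M_commute {i j : ZMod p} (hij : i ≠ j) {g h : Q p} (hg : g ∈ M i)
    (hh : h ∈ M j) : Commute g h := by
  have key {i j : ZMod p} (hij : i ≠ j) (hj : j ≠ i - 1) {g h : Q p} (hg : g ∈ M i)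
      (hh : h ∈ M j) : Commute g h := by
    have hg' := M_le_centralizer_Z hij.symm hj hg
    rw [← centralizer_closure] at hg'
    exact (mem_centralizer_iff.mp hg' h (M_le_closure_range_Z j hh)).symm
  rcases eq_or_ne j (i - 1) with rfl | hj
  · exact (key hij.symm (fun e => zmod_two_ne_zero (by linear_combination e)) hh hg).symm
  · exact key hij hj hg hh

def σHom : Q p →* (ZMod p → Gam p) := PresentedGroup.toGroup lift_σt_eq_one

lemma σHom_X (i : ZMod p) : σHom (X i) = σt p i := PresentedGroup.toGroup.of _

lemma σHom_U_apply_of_ne {i j : ZMod p} (hji : j ≠ i) (n : ℤ) : σHom (U i n) j = 1 := by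
  simp only [U, Z, map_mul, map_inv, map_cnj, map_zpow, σHom_X, Pi.mul_apply, Pi.inv_apply,
    cnj_apply, Pi.pow_apply]
  rcases eq_or_ne j (i + 1) with rfl | hj
  · rw [σt_apply_of_ne (i := i - 1) (fun e => zmod_two_ne_zero (by linear_combination e))
      (fun e => one_ne_zero (by linear_combination e))]
    simp
  · rw [σt_apply_of_ne hji hj]
    simp

lemma M_le_ker_eval {i j : ZMod p} (hij : i ≠ j) :
    M i ≤ ((Pi.evalMonoidHom _ j).comp σHom).ker := by
  rw [M, closure_le]
  rintro _ ⟨n, k, rfl⟩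
  simp [map_cnj, σHom_U_apply_of_ne hij.symm]

lemma τ_σHom_apply_self (i : ZMod p) {g : Q p} (hg : g ∈ closure {X (i - 1), X i}) :
    τ i (σHom g i) = g := by
  refine MonoidHom.eqOn_closure (f := (τ i).comp ((Pi.evalMonoidHom _ i).comp σHom))
    (g := MonoidHom.id _) ?_ hg
  rintro _ (rfl | rfl)
  · have hα : σt p (i - 1) i = αΓ p := by rw [← σt_apply_add_one (i - 1), sub_add_cancel]
    change τ i (σHom (X (i - 1)) i) = X (i - 1)
    rw [σHom_X, hα]
    exact PresentedGroup.toGroup.of _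
  · change τ i (σHom (X i) i) = X i
    rw [σHom_X, σt_apply_self]
    exact PresentedGroup.toGroup.of _

lemma eq_one_of_mem_M {i : ZMod p} {g : Q p} (hg : g ∈ M i) (h : σHom g i = 1) : g = 1 := by
  rw [← τ_σHom_apply_self i (closure_range_Z_le i (M_le_closure_range_Z i hg)), h, map_one]

def χ : Q p →* (ZMod p → Multiplicative (ZMod p)) := (MonoidHom.compLeft (θ p) (ZMod p)).comp σHom

lemma χ_X (i : ZMod p) : χ (X i) = Pi.mulSingle i (.ofAdd 1) := by
  funext k
  simp only [χ, MonoidHom.comp_apply, MonoidHom.compLeft_apply, σHom_X, Function.comp_apply]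
  rcases eq_or_ne k i with rfl | hki
  · simp [σt_apply_self, θ_ρΓ]
  rcases eq_or_ne k (i + 1) with rfl | hk
  · simp [σt_apply_add_one, θ_αΓ, hki]
  · simp [σt_apply_of_ne hki hk, hki]

theorem σHom_injective : Function.Injective (σHom (p := p)) := by
  refine (injective_iff_map_eq_one _).mpr fun q hq => ?_
  have hM : q ∈ ⨆ i, M i :=
    ker_le_of_commute_mk (⨆ i, M i) (PresentedGroup.closure_range_of _) X_pow_card X_commute_mk
      χ χ_X (by simp [χ, hq])
  exact eq_one_of_mem_iSup (fun i j hij _ _ => M_commute hij)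
    (fun j => (Pi.evalMonoidHom _ j).comp σHom) (fun i j => M_le_ker_eval)
    (fun i g hg => eq_one_of_mem_M hg) hM (fun j => by simp [hq])

end PhiDelta

/-- The subgroup `⟨σ₀, …, σ_{p-1}⟩` of `Γ^p` is isomorphic,
via `xᵢ ↦ σᵢ`, to the group presented on `x₀, …, x_{p-1}` by the relators of
`PhiDeltaRels`; equivalently, the kernel of the homomorphism
`FreeGroup (ℤ/pℤ) → Γ^p`, `xᵢ ↦ σᵢ`, is the normal closure of those
relators. -/
theorem PhiDelta_presentation (p : ℕ) (hp : 3 ≤ p) :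
    (FreeGroup.lift (σt p) : FreeGroup (ZMod p) →* (ZMod p → Gam p)).ker =
      Subgroup.normalClosure (PhiDeltaRels p) := by
  have : Fact (2 < p) := ⟨hp⟩
  have h : FreeGroup.lift (σt p) = PhiDelta.σHom.comp (PresentedGroup.mk (PhiDeltaRels p)) := rfl
  rw [h, ← MonoidHom.comap_ker, (MonoidHom.ker_eq_bot_iff _).mpr PhiDelta.σHom_injective,
    MonoidHom.comap_bot]
  exact QuotientGroup.ker_mk' _
end

section
/- In Γ^p, for all i ≠ j in ℤ/pℤ and all m, n ∈ ℤ/pℤ, the identity σ_{i,m+i}^{-1}·σ_{j,n+i}^{-1}·σ_{i,m+j}·σ_{j,n+j} = 1 holds (indices and second subscripts read modulo p). -/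
/-- The generator `τ` of `Γ`. -/
def τΓ (p : ℕ) : Gam p := PresentedGroup.of 1

/-- `τᵢ ∈ Γ^p`: the element whose `i`-th coordinate is `τ`, others trivial. -/
def τt (p : ℕ) (i : ZMod p) : ZMod p → Gam p := Pi.mulSingle i (τΓ p)

/-- `σᵢ = τᵢ·α_{i+1}·α_{i+2}²···α_{i+k}^k···α_{i-1}^{p-1} ∈ Γ^p`
(indices mod `p`): the element of `Γ^p` whose `i`-th coordinate is `τ` and
whose `(i+k)`-th coordinate is `α^k` for `1 ≤ k ≤ p-1`. -/
def σg (p : ℕ) (i : ZMod p) : ZMod p → Gam p :=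
  fun x => if x = i then τΓ p else αΓ p ^ (x - i).val

/-- `σ_{i,n} = σᵢ^{αᵢⁿ} = αᵢ⁻ⁿ·σᵢ·αᵢⁿ ∈ Γ^p`, with the exponent `n` read
modulo `p`. -/
def σgn (p : ℕ) (i n : ZMod p) : ZMod p → Gam p :=
  (αt p i ^ n.val)⁻¹ * σg p i * αt p i ^ n.val

/-!
The identity is checked coordinatewise in `Γ^p`. Away from coordinates `i` and `j` all four
factors are powers of `α`, which commute. At coordinate `i` the two `σ_i`-factors are the
conjugates of `τ` by `α^{m+i}` and `α^{m+j}`, separated by the constant `σ_j`-entry `α^{i-j}`;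
they cancel because `α^{m+j} α^{i-j} = α^{m+i}`, where `α^p = 1` lets exponents be read
modulo `p`. Coordinate `j` is symmetric.
-/

namespace GuptaSidki

variable {p : ℕ}

lemma αΓ_pow_self : αΓ p ^ p = 1 := by
  change (PresentedGroup.of 0 : PresentedGroup (CpCpRels p)) ^ p = 1
  rw [PresentedGroup.of, ← map_pow]
  exact PresentedGroup.one_of_mem (Set.mem_insert _ _)

lemma αΓ_pow_val_add [NeZero p] (a b : ZMod p) :
    αΓ p ^ (a + b).val = αΓ p ^ a.val * αΓ p ^ b.val := by
  rw [← pow_add, ZMod.val_add, ← pow_eq_pow_mod _ αΓ_pow_self]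

lemma σgn_apply_self (i n : ZMod p) :
    σgn p i n i = (αΓ p ^ n.val)⁻¹ * τΓ p * αΓ p ^ n.val := by
  simp [σgn, σg, αt]

lemma σgn_apply_of_ne {i x : ZMod p} (hx : x ≠ i) (n : ZMod p) :
    σgn p i n x = αΓ p ^ (x - i).val := by
  simp [σgn, σg, αt, hx]

end GuptaSidki

open GuptaSidki in
theorem guptaSidki_schreier_relations_general
    (p : ℕ) (hp : p.Prime)
    (i j m n : ZMod p) (hij : i ≠ j) :
    (σgn p i (m + i))⁻¹ * (σgn p j (n + i))⁻¹ *
      σgn p i (m + j) * σgn p j (n + j) = 1 := by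
  have : NeZero p := ⟨hp.ne_zero⟩
  funext x
  simp only [Pi.mul_apply, Pi.inv_apply, Pi.one_apply]
  by_cases hxi : x = i
  · subst x
    have hshift : αΓ p ^ (m + i).val = αΓ p ^ (m + j).val * αΓ p ^ (i - j).val := by
      rw [← αΓ_pow_val_add, add_add_sub_cancel]
    rw [σgn_apply_self, σgn_apply_self, σgn_apply_of_ne hij, σgn_apply_of_ne hij, hshift]
    group
  by_cases hxj : x = j
  · subst x
    have hshift : αΓ p ^ (n + j).val = αΓ p ^ (n + i).val * αΓ p ^ (j - i).val := by
      rw [← αΓ_pow_val_add, add_add_sub_cancel]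
    rw [σgn_apply_self, σgn_apply_self, σgn_apply_of_ne hij.symm, σgn_apply_of_ne hij.symm,
      hshift]
    group
  rw [σgn_apply_of_ne hxi, σgn_apply_of_ne hxj, σgn_apply_of_ne hxi, σgn_apply_of_ne hxj,
    mul_assoc, ((Commute.refl (αΓ p)).pow_pow _ _).eq]
  group

/-- In `Γ^p`, for all `i ≠ j` in `ℤ/pℤ` and all
`m, n ∈ ℤ/pℤ`, one has
`σ_{i,m+i}⁻¹·σ_{j,n+i}⁻¹·σ_{i,m+j}·σ_{j,n+j} = 1`
(indices and second subscripts read modulo `p`). -/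
theorem guptaSidki_schreier_relations
    (p : ℕ) (hp : p.Prime) (ho : Odd p)
    (i j m n : ZMod p) (hij : i ≠ j) :
    (σgn p i (m + i))⁻¹ * (σgn p j (n + i))⁻¹ *
      σgn p i (m + j) * σgn p j (n + j) = 1 :=
  guptaSidki_schreier_relations_general p hp i j m n hij
end
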